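/- Let A be a memory interval and let B₁,…,B_k be all branches of T intersecting A, ordered left-to-right. Then the sequence of depths of the bottommost vertices of these branches contained in A, namely (max_{v ∈ B_i ∩ A} d(v)) for i = 1,…,k, is non-increasing. -/

import Mathlib

namespace VEB

inductive OTree : Type where
  | node : List OTree → OTree

def OTree.children : OTree → List OTree
  | .node cs => cs

mutual
  def height : OTree → ℕ
    | .node cs => 1 + heightList cs
  def heightList : List OTree → ℕ
    | [] => 0
    | c :: cs => max (height c) (heightList cs)
end

def subtreeAt? : OTree → List ℕ → Option OTree
  | t, [] => some t
  | t, i :: p =>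
    match t.children[i]? with
    | some c => subtreeAt? c p
    | none => none

/-- `p` is (the path of) a vertex of `t`. -/
def IsVertex (t : OTree) (p : List ℕ) : Prop := (subtreeAt? t p).isSome

/-- `p` is a leaf of `t`. -/
def IsLeaf (t : OTree) (p : List ℕ) : Prop := subtreeAt? t p = some (.node [])

/-- All leaves of `t` are at the same depth (the bottom level). -/
def Uniform (t : OTree) : Prop := ∀ p, IsLeaf t p → p.length + 1 = height t

/-- The top `m+1` levels of `t` (the truncation of height `m+1`). -/
def trunc : ℕ → OTree → OTree
  | 0, _ => .node []
  | m+1, t => .node (t.children.map (trunc m))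

/-- Paths of the vertices at depth `m`, in left-to-right order. -/
def levelPaths : ℕ → OTree → List (List ℕ)
  | 0, _ => [[]]
  | m+1, t => (t.children.zipIdx.map fun ic => (levelPaths m ic.1).map (ic.2 :: ·)).flatten

/-- The level at which a tree of height `h` is cut: `max ⌊ε h⌋ 1`. -/
noncomputable def cutLevel (ε : ℝ) (h : ℕ) : ℕ := max ⌊ε * (h : ℝ)⌋₊ 1

/-- The van Emde Boas order of the vertex paths of `t` (with recursion fuel). -/
noncomputable def vEBAux (ε : ℝ) : ℕ → OTree → List (List ℕ)
  | 0, _ => []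
  | fuel+1, t =>
    if height t ≤ 1 then [[]]
    else
      let m := cutLevel ε (height t)
      vEBAux ε fuel (trunc (m - 1) t) ++
        ((levelPaths m t).map fun q =>
          match subtreeAt? t q with
          | some s => (vEBAux ε fuel s).map (q ++ ·)
          | none => []).flatten

/-- The van Emde Boas order `vEB_ε(t)` of the vertex paths of `t`. -/
noncomputable def vEB (ε : ℝ) (t : OTree) : List (List ℕ) := vEBAux ε (height t) t

/-- Position (index) of vertex `p` in the van Emde Boas order. -/
noncomputable def pos (ε : ℝ) (t : OTree) (p : List ℕ) : ℕ := (vEB ε t).idxOf p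

/-- `A` is a set of vertices occupying consecutive positions in `vEB_ε(t)`. -/
def MemInterval (ε : ℝ) (t : OTree) (A : Set (List ℕ)) : Prop :=
  ∃ i n, A = {p | p ∈ ((vEB ε t).drop i).take n}

/-- The vertices of the decomposition `D` of `t`: pairs `(p, k)` of the root path
and the height of a decomposition subtree (with recursion fuel). -/
noncomputable def decompAux (ε : ℝ) : ℕ → OTree → List (List ℕ × ℕ)
  | 0, _ => []
  | fuel+1, t =>
    if height t ≤ 1 then [([], 1)]
    else
      let m := cutLevel ε (height t)
      ([], height t) ::
        (decompAux ε fuel (trunc (m - 1) t) ++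
          ((levelPaths m t).map fun q =>
            match subtreeAt? t q with
            | some s => (decompAux ε fuel s).map fun r => (q ++ r.1, r.2)
            | none => []).flatten)

/-- The vertices of the decomposition `D` of `t`. -/
noncomputable def decompVerts (ε : ℝ) (t : OTree) : List (List ℕ × ℕ) :=
  decompAux ε (height t) t

/-- The children in the decomposition tree `D` of the decomposition vertex `(p, k)`:
the top tree followed by the bottom trees in left-to-right order. -/
noncomputable def dChildren (ε : ℝ) (t : OTree) (p : List ℕ) (k : ℕ) : List (List ℕ × ℕ) :=
  if k ≤ 1 then []
  else
    match subtreeAt? t p with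
    | some s =>
      (p, cutLevel ε k) ::
        (levelPaths (cutLevel ε k) s).map fun q => (p ++ q, k - cutLevel ε k)
    | none => []

/-- The decomposition subtree `(p, k)` contains the vertex `w` of `t`;
equivalently, the leaf `{w}` of `D` lies in the subtree of `D` rooted at `(p, k)`. -/
def DContains (p : List ℕ) (k : ℕ) (w : List ℕ) : Prop :=
  p <+: w ∧ w.length < p.length + k

/-- Vertex `v` is to the left of the branch with leaf `ℓ`. -/
def LeftOfBranch (v ℓ : List ℕ) : Prop := List.Lex (· < ·) v (ℓ.take v.length)

/-- Vertex `v` is to the right of the branch with leaf `ℓ`. -/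
def RightOfBranch (v ℓ : List ℕ) : Prop := List.Lex (· < ·) (ℓ.take v.length) v

/-- Every internal vertex of `t` has at least `a` children. -/
def MinArity (t : OTree) (a : ℕ) : Prop :=
  ∀ p s, subtreeAt? t p = some s → s.children ≠ [] → a ≤ s.children.length

/-- Every internal vertex of `t` has at most `b` children. -/
def MaxArity (t : OTree) (b : ℕ) : Prop :=
  ∀ p s, subtreeAt? t p = some s → s.children.length ≤ b

/-- `w` lies on the leftmost branch descending from `v` (always taking the leftmost child). -/
def OnLeftmostBranch (v w : List ℕ) : Prop :=
  v <+: w ∧ ∀ n (hn : n < w.length), v.length ≤ n → w.get ⟨n, hn⟩ = 0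

/-- `w` lies on the rightmost branch descending from `v` (always taking the rightmost child). -/
def OnRightmostBranch (t : OTree) (v w : List ℕ) : Prop :=
  v <+: w ∧ ∀ n (hn : n < w.length), v.length ≤ n →
    ∀ s, subtreeAt? t (w.take n) = some s → w.get ⟨n, hn⟩ + 1 = s.children.length

/-! The van Emde Boas order lists every vertex exactly once, and it lists `p` before `q`
whenever `p` is lexicographically smaller than `q` and not deeper: the top tree comes before
the bottom trees, the bottom trees come from left to right, and inside each piece the order
is inherited recursively. Now let `n₁ < n₂` be the depths of the bottommost vertices in `A` of
two branches `ℓ₁` left of `ℓ₂`. The vertex of `ℓ₁` at depth `n₂` is a descendant of `ℓ₁`'s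
vertex at depth `n₁` and lies left of `ℓ₂`'s vertex at depth `n₂`, so it sits between two
vertices of the interval `A` and hence in `A`, contradicting the maximality of `n₁`. -/

open scoped List

section Lists

variable {α β : Type*}

theorem _root_.List.Lex.lex_take_or_lex_drop {r : α → α → Prop} {p q : List α}
    (h : List.Lex r p q) (m : ℕ) :
    List.Lex r (p.take m) (q.take m) ∨
      (p.take m = q.take m ∧ List.Lex r (p.drop m) (q.drop m)) := by
  induction h generalizing m with
  | nil => cases m <;> simp
  | rel hab => cases m <;> simp [List.Lex.rel hab]
  | cons h ih =>
    cases m with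
    | zero => simp [List.Lex.cons h]
    | succ m =>
      rcases ih m with h' | ⟨h', h''⟩
      · exact Or.inl (List.Lex.cons h')
      · exact Or.inr ⟨by simp [h'], h''⟩

theorem _root_.List.lex_take_of_lt {r : α → α → Prop} {l : List α} {m n : ℕ} (hmn : m < n)
    (hn : n ≤ l.length) : List.Lex r (l.take m) (l.take n) := by
  obtain ⟨x, xs, hx⟩ := List.exists_cons_of_ne_nil
    (show (l.take n).drop m ≠ [] by simp; omega)
  have hm : (l.take n).take m = l.take m := by simp [List.take_take, hmn.le]
  rw [← List.take_append_drop m (l.take n), hx, hm]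
  simpa using List.Lex.append_left r (List.Lex.nil (a := x) (l := xs)) (l.take m)

theorem _root_.List.Pairwise.pair_sublist {R : α → α → Prop} [Std.Asymm R] {l : List α}
    (hl : l.Pairwise R) {a b : α} (ha : a ∈ l) (hb : b ∈ l) (hab : R a b) : [a, b] <+ l := by
  induction l with
  | nil => cases ha
  | cons x l ih =>
    obtain ⟨hx, hl⟩ := List.pairwise_cons.mp hl
    rcases List.mem_cons.mp ha with rfl | ha'
    · rcases List.mem_cons.mp hb with rfl | hb'
      · exact absurd hab (Std.Irrefl.irrefl _)
      · exact (List.singleton_sublist.mpr hb').cons_cons _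
    · rcases List.mem_cons.mp hb with rfl | hb'
      · exact absurd (hx _ ha') (Std.Asymm.asymm _ _ hab)
      · exact (ih hl ha' hb').cons x

theorem _root_.List.pair_sublist_append {l₁ l₂ : List α} {a b : α} (ha : a ∈ l₁)
    (hb : b ∈ l₂) : [a, b] <+ l₁ ++ l₂ :=
  (List.singleton_sublist.mpr ha).append (List.singleton_sublist.mpr hb)

theorem _root_.List.pair_sublist_flatMap {l : List α} {f : α → List β} {a b : α} {x y : β}
    (hab : [a, b] <+ l) (hx : x ∈ f a) (hy : y ∈ f b) : [x, y] <+ l.flatMap f := by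
  have hab' : f a ++ f b <+ l.flatMap f := by simpa using hab.flatMap f
  exact (List.pair_sublist_append hx hy).trans hab'

theorem _root_.List.Nodup.idxOf_lt_idxOf_of_pair_sublist [DecidableEq α] {l : List α}
    (hl : l.Nodup) {a b : α} (hab : [a, b] <+ l) : l.idxOf a < l.idxOf b := by
  obtain ⟨r₁, r₂, rfl, ha, hb⟩ := List.cons_sublist_iff.mp hab
  have hb : b ∈ r₂ := List.singleton_sublist.mp hb
  have hb₁ : b ∉ r₁ := fun hb₁ => List.disjoint_of_nodup_append hl hb₁ hb
  rw [List.idxOf_append, List.idxOf_append, if_pos ha, if_neg hb₁]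
  exact (List.idxOf_lt_length_of_mem ha).trans_le (Nat.le_add_left _ _)

theorem _root_.List.Nodup.mem_take_drop_iff [DecidableEq α] {l : List α} (hl : l.Nodup)
    {i n : ℕ} {a : α} :
    a ∈ (l.drop i).take n ↔ a ∈ l ∧ i ≤ l.idxOf a ∧ l.idxOf a < i + n := by
  constructor
  · intro ha
    obtain ⟨j, hj, rfl⟩ := List.mem_iff_getElem.mp ha
    simp only [List.length_take, List.length_drop] at hj
    simp only [List.getElem_take, List.getElem_drop]
    rw [hl.idxOf_getElem _ (by omega)]
    exact ⟨List.getElem_mem _, by omega, by omega⟩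
  · rintro ⟨ha, hi, hn⟩
    have hlt := List.idxOf_lt_length_of_mem ha
    refine List.mem_iff_getElem.mpr ⟨l.idxOf a - i, by simp; omega, ?_⟩
    simp only [List.getElem_take, List.getElem_drop, Nat.add_sub_cancel' hi]
    exact List.getElem_idxOf hlt

theorem _root_.List.Nodup.mem_take_drop_of_pair_sublist [DecidableEq α] {l : List α}
    (hl : l.Nodup) {i n : ℕ} {a b c : α} (hab : [a, b] <+ l) (hbc : [b, c] <+ l)
    (ha : a ∈ (l.drop i).take n) (hc : c ∈ (l.drop i).take n) : b ∈ (l.drop i).take n := by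
  rw [hl.mem_take_drop_iff] at ha hc ⊢
  have h₁ := hl.idxOf_lt_idxOf_of_pair_sublist hab
  have h₂ := hl.idxOf_lt_idxOf_of_pair_sublist hbc
  exact ⟨hab.subset (by simp), by omega, by omega⟩

end Lists

section Trees

variable {t s : OTree} {p q : List ℕ}

theorem subtreeAt?_append (t : OTree) (p q : List ℕ) :
    subtreeAt? t (p ++ q) = (subtreeAt? t p).bind (subtreeAt? · q) := by
  induction p generalizing t with
  | nil => rfl
  | cons i p ih =>
    simp only [List.cons_append, subtreeAt?]
    cases t.children[i]? with
    | none => rfl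
    | some c => exact ih c

theorem isVertex_iff_exists_subtreeAt? : IsVertex t p ↔ ∃ s, subtreeAt? t p = some s :=
  Option.isSome_iff_exists

theorem isVertex_append_of_subtreeAt? (hs : subtreeAt? t p = some s) :
    IsVertex t (p ++ q) ↔ IsVertex s q := by
  simp [IsVertex, subtreeAt?_append, hs]

theorem isVertex_nil (t : OTree) : IsVertex t [] := rfl

theorem IsLeaf.isVertex (h : IsLeaf t p) : IsVertex t p := by
  rw [IsVertex, h]; rfl

theorem IsVertex.of_prefix (hq : IsVertex t q) (hpq : p <+: q) : IsVertex t p := by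
  obtain ⟨r, rfl⟩ := hpq
  obtain ⟨s, hs⟩ := isVertex_iff_exists_subtreeAt?.mp hq
  cases hp : subtreeAt? t p with
  | none => simp [subtreeAt?_append, hp] at hs
  | some _ => simp [IsVertex, hp]

theorem IsVertex.exists_subtreeAt?_take (hp : IsVertex t p) (m : ℕ) :
    ∃ s, subtreeAt? t (p.take m) = some s ∧ IsVertex s (p.drop m) := by
  obtain ⟨s, hs⟩ := isVertex_iff_exists_subtreeAt?.mp (hp.of_prefix (List.take_prefix m p))
  refine ⟨s, hs, ?_⟩
  rwa [← isVertex_append_of_subtreeAt? hs, List.take_append_drop]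

theorem one_le_height (t : OTree) : 1 ≤ height t := by
  cases t; rw [height]; omega

theorem height_le_heightList {c : OTree} {cs : List OTree} (h : c ∈ cs) :
    height c ≤ heightList cs := by
  induction cs with
  | nil => cases h
  | cons a cs ih =>
    rw [heightList]
    rcases List.mem_cons.mp h with rfl | h
    · exact le_max_left _ _
    · exact (ih h).trans (le_max_right _ _)

theorem height_add_length_le_of_subtreeAt? (hs : subtreeAt? t p = some s) :
    height s + p.length ≤ height t := by
  induction p generalizing t with
  | nil => cases hs; rfl
  | cons i p ih =>
    rw [subtreeAt?] at hs
    cases hc : t.children[i]? with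
    | none => simp [hc] at hs
    | some c =>
      rw [hc] at hs
      cases t with
      | node cs =>
        have := height_le_heightList (cs := cs) (List.mem_of_getElem? hc)
        have := ih hs
        rw [height, List.length_cons]
        omega

theorem height_lt_of_subtreeAt? (hs : subtreeAt? t p = some s) (hp : p ≠ []) :
    height s < height t := by
  have := height_add_length_le_of_subtreeAt? hs
  have := List.length_pos_iff.mpr hp
  omega

theorem IsVertex.length_lt_height (hp : IsVertex t p) : p.length < height t := by
  obtain ⟨s, hs⟩ := isVertex_iff_exists_subtreeAt?.mp hp
  have := height_add_length_le_of_subtreeAt? hs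
  have := one_le_height s
  omega

theorem subtreeAt?_trunc (k : ℕ) (t : OTree) (p : List ℕ) :
    subtreeAt? (trunc k t) p =
      if p.length ≤ k then (subtreeAt? t p).map (trunc (k - p.length)) else none := by
  induction p generalizing t k with
  | nil => simp [subtreeAt?]
  | cons i p ih =>
    cases k with
    | zero => simp [trunc, subtreeAt?, OTree.children]
    | succ k =>
      cases t with
      | node cs =>
        simp only [subtreeAt?, trunc, OTree.children, List.getElem?_map, List.length_cons,
          Nat.add_le_add_iff_right]
        cases cs[i]? with
        | none => simp
        | some c => simp [ih, Nat.add_sub_add_right]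

theorem isVertex_trunc {k : ℕ} : IsVertex (trunc k t) p ↔ IsVertex t p ∧ p.length ≤ k := by
  unfold IsVertex
  rw [subtreeAt?_trunc]
  split_ifs with h <;> simp [h]

theorem height_trunc_le (k : ℕ) (t : OTree) : height (trunc k t) ≤ k + 1 := by
  induction k generalizing t with
  | zero => rfl
  | succ k ih =>
    cases t with
    | node cs =>
      suffices heightList (cs.map (trunc k)) ≤ k + 1 by rw [trunc, height, OTree.children]; omega
      induction cs with
      | nil => simp [heightList]
      | cons c cs ihc => exact max_le (ih c) ihc

theorem mem_levelPaths {m : ℕ} : q ∈ levelPaths m t ↔ q.length = m ∧ IsVertex t q := by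
  induction m generalizing t q with
  | zero =>
    simp only [levelPaths, List.mem_singleton, List.length_eq_zero_iff]
    exact ⟨fun h => ⟨h, h ▸ isVertex_nil t⟩, And.left⟩
  | succ m ih =>
    rw [levelPaths, List.mem_flatten]
    constructor
    · rintro ⟨_, hL, hq⟩
      obtain ⟨⟨c, i⟩, hci, rfl⟩ := List.mem_map.mp hL
      obtain ⟨q', hq', rfl⟩ := List.mem_map.mp hq
      obtain ⟨hlen, hv⟩ := ih.mp hq'
      refine ⟨by simp [hlen], ?_⟩
      rwa [IsVertex, subtreeAt?, List.mk_mem_zipIdx_iff_getElem?.mp hci]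
    · rintro ⟨hlen, hv⟩
      cases q with
      | nil => simp at hlen
      | cons i q =>
        rw [IsVertex, subtreeAt?] at hv
        cases hc : t.children[i]? with
        | none => simp [hc] at hv
        | some c =>
          rw [hc] at hv
          refine ⟨_, List.mem_map.mpr ⟨(c, i), List.mk_mem_zipIdx_iff_getElem?.mpr hc, rfl⟩, ?_⟩
          exact List.mem_map.mpr ⟨q, ih.mpr ⟨by simpa using hlen, hv⟩, rfl⟩

theorem pairwise_levelPaths (m : ℕ) (t : OTree) :
    (levelPaths m t).Pairwise (List.Lex (· < ·)) := by
  induction m generalizing t with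
  | zero => simp [levelPaths]
  | succ m ih =>
    have hidx : t.children.zipIdx.Pairwise (·.2 < ·.2) := by
      rw [← List.pairwise_map (f := Prod.snd), List.zipIdx_map_snd]
      exact List.pairwise_lt_range'
    rw [levelPaths, List.pairwise_flatten, List.pairwise_map]
    refine ⟨?_, hidx.imp ?_⟩
    · intro L hL
      obtain ⟨⟨c, i⟩, -, rfl⟩ := List.mem_map.mp hL
      exact (ih c).map _ fun _ _ => List.Lex.cons
    · rintro ⟨c, i⟩ ⟨d, j⟩ hij _ hx _ hy
      obtain ⟨_, -, rfl⟩ := List.mem_map.mp hx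
      obtain ⟨_, -, rfl⟩ := List.mem_map.mp hy
      exact List.Lex.rel hij

end Trees

section Layout

variable {g : OTree → List (List ℕ)} {m : ℕ} {t s : OTree} {p q u : List ℕ}

def bottomBlock (g : OTree → List (List ℕ)) (t : OTree) (q : List ℕ) : List (List ℕ) :=
  match subtreeAt? t q with
  | some s => (g s).map (q ++ ·)
  | none => []

/-- For `g = vEB`, this is `vEB(R₁) ⋯ vEB(R_k)` for the bottom trees `Rᵢ` of `t` rooted at
depth `m`, with the vertices of `Rᵢ` written as paths from the root of `t`. -/
def bottomLayout (g : OTree → List (List ℕ)) (m : ℕ) (t : OTree) : List (List ℕ) :=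
  (levelPaths m t).flatMap (bottomBlock g t)

theorem bottomBlock_of_subtreeAt? (hs : subtreeAt? t q = some s) :
    bottomBlock g t q = (g s).map (q ++ ·) := by
  simp [bottomBlock, hs]

theorem prefix_of_mem_bottomBlock (hp : p ∈ bottomBlock g t q) : q <+: p := by
  unfold bottomBlock at hp
  split at hp
  · obtain ⟨r, -, rfl⟩ := List.mem_map.mp hp
    exact List.prefix_append q r
  · cases hp

theorem take_eq_of_mem_bottomBlock (hq : q ∈ levelPaths m t) (hp : p ∈ bottomBlock g t q) :
    p.take m = q := by
  rw [← (mem_levelPaths.mp hq).1]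
  exact (List.prefix_iff_eq_take.mp (prefix_of_mem_bottomBlock hp)).symm

theorem mem_bottomLayout
    (hg : ∀ q s, q.length = m → subtreeAt? t q = some s → ∀ r, r ∈ g s ↔ IsVertex s r) :
    p ∈ bottomLayout g m t ↔ IsVertex t p ∧ m ≤ p.length := by
  simp only [bottomLayout, List.mem_flatMap, mem_levelPaths]
  constructor
  · rintro ⟨q, ⟨hqm, hq⟩, hp⟩
    obtain ⟨s, hs⟩ := isVertex_iff_exists_subtreeAt?.mp hq
    obtain ⟨r, hr, rfl⟩ := List.mem_map.mp (bottomBlock_of_subtreeAt? hs ▸ hp)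
    exact ⟨(isVertex_append_of_subtreeAt? hs).mpr ((hg q s hqm hs r).mp hr), by simp [hqm]⟩
  · rintro ⟨hp, hpm⟩
    obtain ⟨s, hs, hps⟩ := hp.exists_subtreeAt?_take m
    refine ⟨p.take m, ⟨by simp [hpm], hp.of_prefix (List.take_prefix m p)⟩, ?_⟩
    rw [bottomBlock_of_subtreeAt? hs, List.mem_map]
    exact ⟨p.drop m, (hg _ s (by simp [hpm]) hs _).mpr hps, List.take_append_drop m p⟩

theorem nodup_bottomLayout
    (hg : ∀ q s, q.length = m → subtreeAt? t q = some s → (g s).Nodup) :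
    (bottomLayout g m t).Nodup := by
  refine List.nodup_flatMap.mpr ⟨fun q hq => ?_, ?_⟩
  · cases hs : subtreeAt? t q with
    | none => simp [bottomBlock, hs]
    | some s =>
      rw [bottomBlock_of_subtreeAt? hs]
      exact (hg q s (mem_levelPaths.mp hq).1 hs).map fun _ _ h => List.append_cancel_left h
  · refine (pairwise_levelPaths m t).imp_of_mem fun hq hq' hlex p hp hp' => ?_
    rw [← take_eq_of_mem_bottomBlock hq hp, ← take_eq_of_mem_bottomBlock hq' hp'] at hlex
    exact Std.Irrefl.irrefl _ hlex

theorem pair_sublist_bottomLayout_of_lex_take (hp : p ∈ bottomLayout g m t)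
    (hq : q ∈ bottomLayout g m t) (hlex : List.Lex (· < ·) (p.take m) (q.take m)) :
    [p, q] <+ bottomLayout g m t := by
  obtain ⟨a, ha, hpa⟩ := List.mem_flatMap.mp hp
  obtain ⟨b, hb, hqb⟩ := List.mem_flatMap.mp hq
  rw [take_eq_of_mem_bottomBlock ha hpa, take_eq_of_mem_bottomBlock hb hqb] at hlex
  exact List.pair_sublist_flatMap ((pairwise_levelPaths m t).pair_sublist ha hb hlex) hpa hqb

theorem pair_sublist_bottomLayout_of_sublist (hu : u ∈ levelPaths m t)
    (hs : subtreeAt? t u = some s) {r₁ r₂ : List ℕ} (h : [r₁, r₂] <+ g s) :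
    [u ++ r₁, u ++ r₂] <+ bottomLayout g m t := by
  have hblock : [u ++ r₁, u ++ r₂] <+ bottomBlock g t u := by
    simpa [bottomBlock_of_subtreeAt? hs] using h.map (u ++ ·)
  exact hblock.trans (List.sublist_flatten_of_mem (List.mem_map_of_mem hu))

end Layout

section VanEmdeBoas

variable {ε : ℝ} {fuel : ℕ} {t : OTree} {p q : List ℕ}

theorem one_le_cutLevel (ε : ℝ) (h : ℕ) : 1 ≤ cutLevel ε h := le_max_right _ _

theorem cutLevel_lt (hε : ε < 1) {h : ℕ} (hh : 2 ≤ h) : cutLevel ε h < h := by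
  refine max_lt ?_ hh
  rcases le_or_gt ε 0 with hε0 | hε0
  · rw [Nat.floor_of_nonpos (mul_nonpos_of_nonpos_of_nonneg hε0 h.cast_nonneg)]
    omega
  · refine (Nat.floor_lt' (by omega)).mpr ?_
    have : (0 : ℝ) < h := by exact_mod_cast (show 0 < h by omega)
    nlinarith

theorem height_trunc_cutLevel_le (hε : ε < 1) (h2 : 2 ≤ height t)
    (ht : height t ≤ fuel + 1) : height (trunc (cutLevel ε (height t) - 1) t) ≤ fuel := by
  have := height_trunc_le (cutLevel ε (height t) - 1) t
  have := cutLevel_lt hε h2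
  omega

theorem height_le_of_subtreeAt?_cutLevel {s : OTree} (ht : height t ≤ fuel + 1)
    (hs : subtreeAt? t q = some s) (hq : q.length = cutLevel ε (height t)) : height s ≤ fuel :=
  Nat.le_of_lt_succ <| (height_lt_of_subtreeAt? hs <| List.ne_nil_of_length_pos <| by
    rw [hq]; exact one_le_cutLevel ε _).trans_le ht

theorem vEBAux_succ (ht : 2 ≤ height t) :
    vEBAux ε (fuel + 1) t =
      vEBAux ε fuel (trunc (cutLevel ε (height t) - 1) t) ++
        bottomLayout (vEBAux ε fuel) (cutLevel ε (height t)) t := by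
  rw [vEBAux, if_neg (by omega)]
  rfl

theorem mem_vEBAux (hε : ε < 1) (ht : height t ≤ fuel) :
    p ∈ vEBAux ε fuel t ↔ IsVertex t p := by
  induction fuel generalizing t p with
  | zero => exact absurd ht (by have := one_le_height t; omega)
  | succ fuel ih =>
    rcases le_or_gt (height t) 1 with h1 | h2
    · rw [vEBAux, if_pos h1, List.mem_singleton]
      refine ⟨fun hp => hp ▸ isVertex_nil t, fun hp => ?_⟩
      have := hp.length_lt_height
      exact List.eq_nil_of_length_eq_zero (by omega)
    · set m := cutLevel ε (height t)
      rw [vEBAux_succ h2, List.mem_append, ih (height_trunc_cutLevel_le hε h2 ht),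
        isVertex_trunc, mem_bottomLayout fun q s hq hs r =>
          ih (height_le_of_subtreeAt?_cutLevel ht hs hq)]
      constructor
      · rintro (⟨hp, -⟩ | ⟨hp, -⟩) <;> exact hp
      · intro hp
        rcases le_or_gt m p.length with hpm | hpm
        · exact Or.inr ⟨hp, hpm⟩
        · exact Or.inl ⟨hp, by omega⟩

theorem mem_vEBAux_trunc_cutLevel (hε : ε < 1) (h2 : 2 ≤ height t) (ht : height t ≤ fuel + 1) :
    p ∈ vEBAux ε fuel (trunc (cutLevel ε (height t) - 1) t) ↔
      IsVertex t p ∧ p.length < cutLevel ε (height t) := by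
  rw [mem_vEBAux hε (height_trunc_cutLevel_le hε h2 ht), isVertex_trunc]
  have := one_le_cutLevel ε (height t)
  exact and_congr_right fun _ => by omega

theorem mem_bottomLayout_vEBAux (hε : ε < 1) (ht : height t ≤ fuel + 1) :
    p ∈ bottomLayout (vEBAux ε fuel) (cutLevel ε (height t)) t ↔
      IsVertex t p ∧ cutLevel ε (height t) ≤ p.length :=
  mem_bottomLayout fun _ _ hq hs _ => mem_vEBAux hε (height_le_of_subtreeAt?_cutLevel ht hs hq)

theorem nodup_vEBAux (hε : ε < 1) (ht : height t ≤ fuel) : (vEBAux ε fuel t).Nodup := by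
  induction fuel generalizing t with
  | zero => exact absurd ht (by have := one_le_height t; omega)
  | succ fuel ih =>
    rcases le_or_gt (height t) 1 with h1 | h2
    · rw [vEBAux, if_pos h1]
      exact List.nodup_singleton _
    · rw [vEBAux_succ h2, List.nodup_append]
      refine ⟨ih (height_trunc_cutLevel_le hε h2 ht),
        nodup_bottomLayout fun q s hq hs => ih (height_le_of_subtreeAt?_cutLevel ht hs hq), ?_⟩
      rintro p hp _ hp' rfl
      have := ((mem_vEBAux_trunc_cutLevel hε h2 ht).mp hp).2
      have := ((mem_bottomLayout_vEBAux hε ht).mp hp').2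
      omega

theorem pair_sublist_vEBAux (hε : ε < 1) (ht : height t ≤ fuel) (hp : IsVertex t p)
    (hq : IsVertex t q) (hlex : List.Lex (· < ·) p q) (hlen : p.length ≤ q.length) :
    [p, q] <+ vEBAux ε fuel t := by
  induction fuel generalizing t p q with
  | zero => exact absurd ht (by have := one_le_height t; omega)
  | succ fuel ih =>
    rcases le_or_gt (height t) 1 with h1 | h2
    · have := hp.length_lt_height
      have := hq.length_lt_height
      rw [List.eq_nil_of_length_eq_zero (by omega : p.length = 0),
        List.eq_nil_of_length_eq_zero (by omega : q.length = 0)] at hlex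
      cases hlex
    · set m := cutLevel ε (height t)
      rw [vEBAux_succ h2]
      rcases lt_or_ge q.length m with hqm | hqm
      · refine (ih (height_trunc_cutLevel_le hε h2 ht) ?_ ?_ hlex hlen).trans
          (List.sublist_append_left _ _)
        · exact isVertex_trunc.mpr ⟨hp, by omega⟩
        · exact isVertex_trunc.mpr ⟨hq, by omega⟩
      have hq' := (mem_bottomLayout_vEBAux hε ht).mpr ⟨hq, hqm⟩
      rcases lt_or_ge p.length m with hpm | hpm
      · exact List.pair_sublist_append ((mem_vEBAux_trunc_cutLevel hε h2 ht).mpr ⟨hp, hpm⟩) hq'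
      have hp' := (mem_bottomLayout_vEBAux hε ht).mpr ⟨hp, hpm⟩
      refine List.Sublist.trans ?_ (List.sublist_append_right _ _)
      rcases hlex.lex_take_or_lex_drop m with htake | ⟨htake, hdrop⟩
      · exact pair_sublist_bottomLayout_of_lex_take hp' hq' htake
      obtain ⟨s, hs, hps⟩ := hp.exists_subtreeAt?_take m
      obtain ⟨s', hs', hqs⟩ := hq.exists_subtreeAt?_take m
      rw [← htake, hs, Option.some_inj] at hs'
      subst hs'
      have hlen_take : (p.take m).length = m := by simp [hpm]
      have hdrop_sub := ih (height_le_of_subtreeAt?_cutLevel ht hs hlen_take) hps hqs hdrop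
        (by simp only [List.length_drop]; omega)
      have := pair_sublist_bottomLayout_of_sublist
        (mem_levelPaths.mpr ⟨hlen_take, hp.of_prefix (List.take_prefix m p)⟩) hs hdrop_sub
      rwa [List.take_append_drop, htake, List.take_append_drop] at this

theorem nodup_vEB (hε : ε < 1) (t : OTree) : (vEB ε t).Nodup :=
  nodup_vEBAux hε le_rfl

theorem pair_sublist_vEB (hε : ε < 1) (hp : IsVertex t p) (hq : IsVertex t q)
    (hlex : List.Lex (· < ·) p q) (hlen : p.length ≤ q.length) : [p, q] <+ vEB ε t :=
  pair_sublist_vEBAux hε le_rfl hp hq hlex hlen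

end VanEmdeBoas

/-- Among the branches intersecting a memory interval `A`, ordered
left-to-right, the depths of the bottommost vertices of the branches contained in `A`
form a non-increasing sequence (stated for any two such branches, the left one `ℓ₁`
and the right one `ℓ₂`). -/
theorem bottommost_depths_antitone
    (ε : ℝ) (hε0 : 0 < ε) (hε1 : ε ≤ 1/2) (t : OTree) (ht : Uniform t)
    (A : Set (List ℕ)) (hA : MemInterval ε t A)
    (ℓ₁ ℓ₂ : List ℕ) (h1 : IsLeaf t ℓ₁) (h2 : IsLeaf t ℓ₂)
    (hord : List.Lex (· < ·) ℓ₁ ℓ₂)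
    (hint1 : ∃ n, n ≤ ℓ₁.length ∧ ℓ₁.take n ∈ A)
    (hint2 : ∃ n, n ≤ ℓ₂.length ∧ ℓ₂.take n ∈ A) :
    sSup {n | n ≤ ℓ₂.length ∧ ℓ₂.take n ∈ A}
      ≤ sSup {n | n ≤ ℓ₁.length ∧ ℓ₁.take n ∈ A} := by
  obtain ⟨i, N, hA⟩ := hA
  have hlen : ℓ₁.length = ℓ₂.length := Nat.add_right_cancel ((ht ℓ₁ h1).trans (ht ℓ₂ h2).symm)
  have hbdd (ℓ : List ℕ) : BddAbove {n | n ≤ ℓ.length ∧ ℓ.take n ∈ A} :=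
    ⟨ℓ.length, fun _ hn => hn.1⟩
  set n₁ := sSup {n | n ≤ ℓ₁.length ∧ ℓ₁.take n ∈ A}
  set n₂ := sSup {n | n ≤ ℓ₂.length ∧ ℓ₂.take n ∈ A}
  obtain ⟨-, hu⟩ : n₁ ≤ ℓ₁.length ∧ ℓ₁.take n₁ ∈ A := Nat.sSup_mem hint1 (hbdd ℓ₁)
  obtain ⟨hn₂, hw⟩ : n₂ ≤ ℓ₂.length ∧ ℓ₂.take n₂ ∈ A := Nat.sSup_mem hint2 (hbdd ℓ₂)
  by_contra! hlt
  refine hlt.not_ge (le_csSup (hbdd ℓ₁) ⟨hlen ▸ hn₂, ?_⟩)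
  rcases hord.lex_take_or_lex_drop n₂ with hlex | ⟨heq, -⟩
  · have hε : ε < 1 := by linarith
    have hv := h1.isVertex.of_prefix (List.take_prefix n₂ ℓ₁)
    rw [hA] at hu hw ⊢
    refine (nodup_vEB hε t).mem_take_drop_of_pair_sublist ?_ ?_ hu hw
    · exact pair_sublist_vEB hε (h1.isVertex.of_prefix (List.take_prefix n₁ ℓ₁)) hv
        (List.lex_take_of_lt hlt (hlen ▸ hn₂)) (by simp [hlt.le])
    · exact pair_sublist_vEB hε hv (h2.isVertex.of_prefix (List.take_prefix n₂ ℓ₂)) hlex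
        (by simp [hlen])
  · exact heq ▸ hw

end VEB
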